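/- arXiv:1806.07211 — 7 statements merged into one kernel-verified Lean document; each statement's English description precedes it below -/
import Mathlib

section
/- Let d be a positive integer, Γ a simplicial complex, and E a (d−1)-dimensional face of Δ_d(Γ). Then deleting E from the d-closure commutes with taking the closure: Δ_d(Γ) \ E with E re-added equals Δ_d(Γ with E deleted and re-added); precisely, (Δ_d(Γ))∖⟨E⟩ ∪ {subsets of E} = Δ_d(Γ∖⟨E⟩ ∪ {subsets of E}), where Γ∖⟨E⟩ ∪ {subsets of E} denotes the deletion Γ\E := {F ∈ Γ : E ⊄ F or F = E} keeping E itself. -/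
namespace ChordalPaper

/-- A simplicial complex on vertex set `Fin n`: a family of finsets closed under subsets. -/
def IsComplex {n : ℕ} (Γ : Set (Finset (Fin n))) : Prop :=
  ∀ F ∈ Γ, ∀ F' ⊆ F, F' ∈ Γ

/-- The `d`-closure `Δ_d(Γ)`: all subsets of size `≤ d`, together with all subsets
all of whose `(d+1)`-element subsets are faces of `Γ`. -/
def dClosure {n : ℕ} (d : ℕ) (Γ : Set (Finset (Fin n))) : Set (Finset (Fin n)) :=
  {F | F.card ≤ d ∨ ∀ G ⊆ F, G.card = d + 1 → G ∈ Γ}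

/-- The pure `(d-1)`-skeleton `⟨[n]⟩^{[d-1]}` of the full simplex: all subsets of size `≤ d`. -/
def fullSkel (n d : ℕ) : Set (Finset (Fin n)) := {F | F.card ≤ d}

/-- A facet: a maximal face. -/
def IsFacet {n : ℕ} (Γ : Set (Finset (Fin n))) (F : Finset (Fin n)) : Prop :=
  F ∈ Γ ∧ ∀ G ∈ Γ, F ⊆ G → G = F

/-- A free face: a face contained in a unique facet. -/
def IsFreeFace {n : ℕ} (Γ : Set (Finset (Fin n))) (E : Finset (Fin n)) : Prop :=
  E ∈ Γ ∧ ∃! F, IsFacet Γ F ∧ E ⊆ F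

/-- Collapse at `E`: remove all faces containing `E` (including `E` itself). -/
def collapseFace {n : ℕ} (Γ : Set (Finset (Fin n))) (E : Finset (Fin n)) :
    Set (Finset (Fin n)) := {F ∈ Γ | ¬ E ⊆ F}

/-- Successive collapses along a list of faces. -/
def collapseList {n : ℕ} (Γ : Set (Finset (Fin n))) :
    List (Finset (Fin n)) → Set (Finset (Fin n))
  | [] => Γ
  | E :: L => collapseList (collapseFace Γ E) L

/-- A free sequence: each face is free in the complex obtained by collapsing the previous ones. -/
def IsFreeSeq {n : ℕ} (Γ : Set (Finset (Fin n))) : List (Finset (Fin n)) → Prop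
  | [] => True
  | E :: L => IsFreeFace Γ E ∧ IsFreeSeq (collapseFace Γ E) L

/-- `d`-collapsibility: a sequence of elementary `d`-collapsings (at free faces of
dimension `< d`, i.e. cardinality `≤ d`) reduces `Γ` to the void complex. -/
def Collapsible {n : ℕ} (d : ℕ) (Γ : Set (Finset (Fin n))) : Prop :=
  ∃ L : List (Finset (Fin n)),
    IsFreeSeq Γ L ∧ (∀ E ∈ L, E.card ≤ d) ∧ collapseList Γ L = ∅

/-- Simplicial deletion `Γ∖E`: remove all faces strictly containing `E` (keeping `E`). -/
def srDel {n : ℕ} (Γ : Set (Finset (Fin n))) (E : Finset (Fin n)) :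
    Set (Finset (Fin n)) := {F ∈ Γ | ¬ E ⊂ F}

/-- Successive simplicial deletions along a list of faces. -/
def srDelList {n : ℕ} (Γ : Set (Finset (Fin n))) :
    List (Finset (Fin n)) → Set (Finset (Fin n))
  | [] => Γ
  | E :: L => srDelList (srDel Γ E) L

/-- A simplicial order for a `d`-closure on `Fin n`: a sequence of non-facet free faces of
cardinality `d` whose successive simplicial deletions reduce the complex to the pure
`(d-1)`-skeleton of the full simplex. -/
def IsSimpOrder {n : ℕ} (d : ℕ) (Γ : Set (Finset (Fin n))) :
    List (Finset (Fin n)) → Prop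
  | [] => Γ = fullSkel n d
  | E :: L => E.card = d ∧ IsFreeFace Γ E ∧ ¬ IsFacet Γ E ∧ IsSimpOrder d (srDel Γ E) L

/-- `Γ` is `d`-chordal: its `d`-closure equals the pure `(d-1)`-skeleton of the full
simplex or admits a simplicial order. -/
def DChordal {n : ℕ} (d : ℕ) (Γ : Set (Finset (Fin n))) : Prop :=
  ∃ L, IsSimpOrder d (dClosure d Γ) L

/-- A minimal nonface of `Γ`. -/
def IsMinNonface {n : ℕ} (Γ : Set (Finset (Fin n))) (F : Finset (Fin n)) : Prop :=
  F ∉ Γ ∧ ∀ G ⊂ F, G ∈ Γ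

end ChordalPaper

open ChordalPaper in
/-- simplicial deletion of a `(d-1)`-dimensional face commutes with taking
the `d`-closure. -/
theorem stmt1 (n d : ℕ) (hd : 1 ≤ d) (Γ : Set (Finset (Fin n))) (hΓ : IsComplex Γ)
    (E : Finset (Fin n)) (hE : E ∈ dClosure d Γ) (hcard : E.card = d) :
    srDel (dClosure d Γ) E = dClosure d (srDel Γ E) := by
  ext F
  simp only [srDel, dClosure, Set.mem_setOf_eq]
  constructor
  · rintro ⟨hF | hF, hnsub⟩
    · exact Or.inl hF
    · refine Or.inr fun G hGF hGcard => ⟨hF G hGF hGcard, fun hEG => hnsub ?_⟩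
      exact lt_of_lt_of_le hEG hGF
  · rintro (hF | hF)
    · refine ⟨Or.inl hF, fun hEF => ?_⟩
      have := Finset.card_lt_card hEF
      omega
    · refine ⟨Or.inr fun G hGF hGcard => (hF G hGF hGcard).1, fun hEF => ?_⟩
      obtain ⟨x, hxF, hxE⟩ := Finset.exists_of_ssubset hEF
      have hsub : insert x E ⊆ F := Finset.insert_subset hxF hEF.subset
      have hcard' : (insert x E).card = d + 1 := by
        rw [Finset.card_insert_of_notMem hxE, hcard]
      exact (hF _ hsub hcard').2 (Finset.ssubset_insert hxE)
end

section
/- If E ⊊ E′ are free faces of a simplicial complex Σ, both of dimension less than d, then if Σ with all faces containing E removed is d-collapsible, so is Σ with all faces containing E′ removed. -/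
/-!
Every face containing the free face `E` lies in its unique facet `F`. For `x ∉ E`, after
collapsing at `insert x E` the faces containing `E` are the faces of `F.erase x` containing `E`,
so `E` is still free, and collapsing at it yields `Σ` collapsed at `E`. Adding the vertices of
`E' \ E` to `E` one at a time gives the theorem.
-/

namespace ChordalPaper

variable {n : ℕ} {S : Set (Finset (Fin n))} {E F G : Finset (Fin n)}

lemma exists_isFacet_superset (hG : G ∈ S) : ∃ F, IsFacet S F ∧ G ⊆ F := by
  obtain ⟨F, hGF, hF⟩ := (Set.toFinite S).exists_le_maximal hG
  exact ⟨F, ⟨hF.prop, fun H hH hFH => (hF.eq_of_le hH hFH).symm⟩, hGF⟩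

lemma IsFreeFace.subset_of_isFacet (hE : IsFreeFace S E) (hF : IsFacet S F) (hEF : E ⊆ F)
    (hG : G ∈ S) (hEG : E ⊆ G) : G ⊆ F := by
  obtain ⟨H, hH, hGH⟩ := exists_isFacet_superset hG
  obtain ⟨F₀, -, hF₀⟩ := hE.2
  rwa [hF₀ H ⟨hH, hEG.trans hGH⟩, ← hF₀ F ⟨hF, hEF⟩] at hGH

lemma IsFreeFace.of_superset (hE : IsFreeFace S E) (hG : G ∈ S) (hEG : E ⊆ G) :
    IsFreeFace S G := by
  obtain ⟨F, hF, hGF⟩ := exists_isFacet_superset hG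
  obtain ⟨F₀, -, hF₀⟩ := hE.2
  refine ⟨hG, F, ⟨hF, hGF⟩, fun H ⟨hH, hGH⟩ => ?_⟩
  rw [hF₀ H ⟨hH, hEG.trans hGH⟩, hF₀ F ⟨hF, hEG.trans hGF⟩]

lemma collapseFace_collapseFace_of_subset {E' : Finset (Fin n)} (h : E ⊆ E') :
    collapseFace (collapseFace S E') E = collapseFace S E := by
  ext G
  simp only [collapseFace, Set.mem_ofPred_eq]
  exact ⟨fun ⟨⟨hG, _⟩, hEG⟩ => ⟨hG, hEG⟩, fun ⟨hG, hEG⟩ => ⟨⟨hG, fun h' => hEG (h.trans h')⟩, hEG⟩⟩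

lemma IsFreeFace.collapseFace_insert (hS : IsComplex S) (hE : IsFreeFace S E) {x : Fin n}
    (hx : x ∉ E) : IsFreeFace (collapseFace S (insert x E)) E := by
  obtain ⟨F, ⟨hF, hEF⟩, -⟩ := hE.2
  have hsub : ∀ G ∈ S, E ⊆ G → G ⊆ F := fun G hG hEG => hE.subset_of_isFacet hF hEF hG hEG
  have hx_notMem : ∀ G ∈ collapseFace S (insert x E), E ⊆ G → x ∉ G :=
    fun G hG hEG hxG => hG.2 (Finset.insert_subset hxG hEG)
  have hEFx : E ⊆ F.erase x := Finset.subset_erase.mpr ⟨hEF, hx⟩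
  have hFx_mem : F.erase x ∈ collapseFace S (insert x E) :=
    ⟨hS F hF.1 _ (Finset.erase_subset x F),
      fun h => Finset.notMem_erase x F (h (Finset.mem_insert_self x E))⟩
  have hFx : IsFacet (collapseFace S (insert x E)) (F.erase x) := by
    refine ⟨hFx_mem, fun G hG hFG => ?_⟩
    have hEG := hEFx.trans hFG
    exact (Finset.subset_erase.mpr ⟨hsub G hG.1 hEG, hx_notMem G hG hEG⟩).antisymm hFG
  refine ⟨⟨hE.1, fun h => hx (h (Finset.mem_insert_self x E))⟩, F.erase x, ⟨hFx, hEFx⟩, ?_⟩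
  rintro G ⟨hG, hEG⟩
  exact (hG.2 _ hFx_mem
    (Finset.subset_erase.mpr ⟨hsub G hG.1.1 hEG, hx_notMem G hG.1 hEG⟩)).symm

lemma Collapsible.of_collapseFace {d : ℕ} (hE : IsFreeFace S E) (hd : E.card ≤ d)
    (h : Collapsible d (collapseFace S E)) : Collapsible d S := by
  obtain ⟨L, hfree, hcard, hvoid⟩ := h
  refine ⟨E :: L, ⟨hE, hfree⟩, ?_, hvoid⟩
  simpa only [List.mem_cons, forall_eq_or_imp] using ⟨hd, hcard⟩

lemma Collapsible.collapseFace_insert {d : ℕ} (hS : IsComplex S) (hE : IsFreeFace S E)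
    (hd : E.card ≤ d) {x : Fin n} (hx : x ∉ E)
    (h : Collapsible d (collapseFace S E)) : Collapsible d (collapseFace S (insert x E)) := by
  refine .of_collapseFace (hE.collapseFace_insert hS hx) hd ?_
  rwa [collapseFace_collapseFace_of_subset (Finset.subset_insert x E)]

theorem Collapsible.collapseFace_of_subset {d : ℕ} (hS : IsComplex S) {E' : Finset (Fin n)}
    (hEE' : E ⊆ E') (hE : IsFreeFace S E) (hE' : E' ∈ S) (hd : E'.card ≤ d)
    (h : Collapsible d (collapseFace S E)) : Collapsible d (collapseFace S E') := by
  rw [← Finset.union_sdiff_of_subset hEE']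
  refine Finset.induction_on' (motive := fun D => Collapsible d (collapseFace S (E ∪ D)))
    (E' \ E) (by simpa using h) fun x D hxD hD hx ih => ?_
  have hxE : x ∉ E := (Finset.mem_sdiff.mp hxD).2
  have hED : E ∪ D ⊆ E' := Finset.union_subset hEE' (hD.trans Finset.sdiff_subset)
  rw [Finset.union_insert]
  exact ih.collapseFace_insert hS (hE.of_superset (hS E' hE' _ hED) Finset.subset_union_left)
    ((Finset.card_le_card hED).trans hd) (by simp [hxE, hx])

end ChordalPaper

open ChordalPaper in
theorem stmt2_general (n d : ℕ) (S : Set (Finset (Fin n))) (hS : IsComplex S)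
    (E E' : Finset (Fin n)) (hEE' : E ⊂ E')
    (hE : IsFreeFace S E) (hE' : IsFreeFace S E')
    (hdE' : E'.card ≤ d)
    (h : Collapsible d (collapseFace S E)) :
    Collapsible d (collapseFace S E') :=
  h.collapseFace_of_subset hS hEE'.subset hE hE'.1 hdE'

open ChordalPaper in
/-- Tancer: if `E ⊊ E'` are free faces of `Σ` of dimension `< d` and
`Σ` collapsed at `E` is `d`-collapsible, then so is `Σ` collapsed at `E'`. -/
theorem stmt2 (n d : ℕ) (hd : 1 ≤ d) (S : Set (Finset (Fin n))) (hS : IsComplex S)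
    (E E' : Finset (Fin n)) (hEE' : E ⊂ E')
    (hE : IsFreeFace S E) (hE' : IsFreeFace S E')
    (hdE : E.card ≤ d) (hdE' : E'.card ≤ d)
    (h : Collapsible d (collapseFace S E)) :
    Collapsible d (collapseFace S E') :=
  stmt2_general n d S hS E E' hEE' hE hE' hdE' h
end

section
/- Let Σ be a simplicial complex on [n] and E_1,…,E_r a free sequence of Σ such that dim E_r = d−1 and E_r is the only element of the sequence whose unique containing facet (at the time of its removal) has dimension ≥ d. Then E_r is a free face of Σ itself, E_1,…,E_{r−1} is a free sequence of Σ with E_r collapsed, and collapsing E_r first and then E_1,…,E_{r−1} yields the same complex as collapsing E_1,…,E_r in order. -/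
namespace ChordalPaper

variable {n : ℕ}

lemma collapseFace_subset (Γ : Set (Finset (Fin n))) (E : Finset (Fin n)) :
    collapseFace Γ E ⊆ Γ := fun _ h => h.1

lemma collapseList_subset (L : List (Finset (Fin n))) :
    ∀ Γ : Set (Finset (Fin n)), collapseList Γ L ⊆ Γ := by
  induction L with
  | nil => exact fun Γ _ h => h
  | cons A L ih => exact fun Γ F hF => collapseFace_subset Γ A (ih _ hF)

lemma facet_of_subset {Γ Γ' : Set (Finset (Fin n))} {F : Finset (Fin n)}
    (hsub : Γ' ⊆ Γ) (hF : IsFacet Γ F) (hmem : F ∈ Γ') : IsFacet Γ' F :=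
  ⟨hmem, fun G hG hFG => hF.2 G (hsub hG) hFG⟩

lemma exists_facet_aux (Γ : Set (Finset (Fin n))) :
    ∀ k (F : Finset (Fin n)), n - F.card ≤ k → F ∈ Γ → ∃ G, IsFacet Γ G ∧ F ⊆ G := by
  intro k
  induction k with
  | zero =>
    intro F hk hF
    have hle : F.card ≤ n := by simpa using Finset.card_le_univ F
    have huniv : F = Finset.univ := Finset.eq_univ_of_card F (by simp; omega)
    exact ⟨F, ⟨hF, fun G hG hFG =>
      Finset.Subset.antisymm (huniv ▸ Finset.subset_univ G) hFG⟩, subset_rfl⟩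
  | succ k ih =>
    intro F hk hF
    by_cases hfac : ∀ G ∈ Γ, F ⊆ G → G = F
    · exact ⟨F, ⟨hF, hfac⟩, subset_rfl⟩
    · push_neg at hfac
      obtain ⟨G, hG, hFG, hne⟩ := hfac
      have hlt : F.card < G.card :=
        Finset.card_lt_card (Finset.ssubset_iff_subset_ne.mpr ⟨hFG, Ne.symm hne⟩)
      obtain ⟨H, hH, hGH⟩ := ih G (by omega) hG
      exact ⟨H, hH, hFG.trans hGH⟩

lemma exists_facet {Γ : Set (Finset (Fin n))} {F : Finset (Fin n)} (hF : F ∈ Γ) :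
    ∃ G, IsFacet Γ G ∧ F ⊆ G :=
  exists_facet_aux Γ (n - F.card) F le_rfl hF

lemma collapseFace_comm (Γ : Set (Finset (Fin n))) (E E' : Finset (Fin n)) :
    collapseFace (collapseFace Γ E) E' = collapseFace (collapseFace Γ E') E := by
  ext F
  simp only [collapseFace, Set.mem_setOf_eq, Set.mem_sep_iff]
  tauto

lemma collapseList_collapseFace (L : List (Finset (Fin n))) :
    ∀ (Γ : Set (Finset (Fin n))) (E : Finset (Fin n)),
      collapseList (collapseFace Γ E) L = collapseFace (collapseList Γ L) E := by
  induction L with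
  | nil => intro Γ E; rfl
  | cons A L ih =>
    intro Γ E
    show collapseList (collapseFace (collapseFace Γ E) A) L = _
    rw [collapseFace_comm, ih]
    rfl

lemma stmt3_main (d : ℕ) (L : List (Finset (Fin n))) :
    ∀ (S : Set (Finset (Fin n))) (E : Finset (Fin n)),
      IsFreeSeq S (L ++ [E]) → E.card = d →
      (∀ i (hi : i < L.length), ∀ F,
        IsFacet (collapseList S (L.take i)) F → L.get ⟨i, hi⟩ ⊆ F → F.card ≤ d) →
      (∃ F, IsFacet (collapseList S L) F ∧ E ⊆ F ∧ d + 1 ≤ F.card) →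
      IsFreeFace S E ∧ IsFreeSeq (collapseFace S E) L := by
  induction L with
  | nil =>
    intro S E hfree _ _ _
    exact ⟨hfree.1, trivial⟩
  | cons A L ih =>
    intro S E hfree hcard hsmall hbig
    obtain ⟨hA, hrest⟩ := hfree
    have hsmall' : ∀ i (hi : i < L.length), ∀ F,
        IsFacet (collapseList (collapseFace S A) (L.take i)) F →
          L.get ⟨i, hi⟩ ⊆ F → F.card ≤ d := by
      intro i hi F hF hsub
      exact hsmall (i + 1) (by simpa using Nat.succ_lt_succ hi) F hF hsub
    have hbig' : ∃ F, IsFacet (collapseList (collapseFace S A) L) F ∧ E ⊆ F ∧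
        d + 1 ≤ F.card := hbig
    obtain ⟨hEfree', hseq'⟩ := ih (collapseFace S A) E hrest hcard hsmall' hbig'
    obtain ⟨hES', F', ⟨hF'fac, hEF'⟩, hF'uniq⟩ := hEfree'
    have hES : E ∈ S := hES'.1
    have hAE : ¬ A ⊆ E := hES'.2
    obtain ⟨hAS, G, ⟨hGfac, hAG⟩, hGuniq⟩ := hA
    have hGcard : G.card ≤ d := hsmall 0 (Nat.succ_pos _) G hGfac hAG
    obtain ⟨F, hFfac, hEF, hFcard⟩ := hbig
    have hFS : F ∈ S := collapseList_subset (A :: L) S hFfac.1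
    -- E is not contained in G
    have hEG : ¬ E ⊆ G := by
      intro h
      have hEqG : E = G := Finset.eq_of_subset_of_card_le h (by omega)
      have hGF : G ⊆ F := hEqG ▸ hEF
      have hFG : F = G := hGfac.2 F hFS hGF
      have : F.card = d := by rw [hFG, ← hEqG, hcard]
      omega
    -- every facet of S containing E equals F'
    have key : ∀ H, IsFacet S H → E ⊆ H → H = F' := by
      intro H hHfac hEH
      have hAH : ¬ A ⊆ H := fun hAH => hEG (hGuniq H ⟨hHfac, hAH⟩ ▸ hEH)
      have hHmem : H ∈ collapseFace S A := ⟨hHfac.1, hAH⟩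
      exact hF'uniq H ⟨facet_of_subset (collapseFace_subset S A) hHfac hHmem, hEH⟩
    -- F' is a facet of S
    have hF'S : F' ∈ S := hF'fac.1.1
    obtain ⟨K, hKfac, hF'K⟩ := exists_facet hF'S
    have hKF' : K = F' := key K hKfac (hEF'.trans hF'K)
    have hF'facS : IsFacet S F' := hKF' ▸ hKfac
    have goal1 : IsFreeFace S E :=
      ⟨hES, F', ⟨hF'facS, hEF'⟩, fun H ⟨h1, h2⟩ => key H h1 h2⟩
    -- A is a free face of collapseFace S E
    have hEA : ¬ E ⊆ A := fun h => hEG (h.trans hAG)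
    have hGmem : G ∈ collapseFace S E := ⟨hGfac.1, hEG⟩
    have goal2a : IsFreeFace (collapseFace S E) A := by
      refine ⟨⟨hAS, hEA⟩, G, ⟨facet_of_subset (collapseFace_subset S E) hGfac hGmem, hAG⟩, ?_⟩
      rintro H ⟨hHfac, hAH⟩
      obtain ⟨K, hKfac, hHK⟩ := exists_facet (collapseFace_subset S E hHfac.1)
      have hKG : K = G := hGuniq K ⟨hKfac, hAH.trans hHK⟩
      exact (hHfac.2 G hGmem (hKG ▸ hHK)).symm
    refine ⟨goal1, goal2a, ?_⟩
    show IsFreeSeq (collapseFace (collapseFace S E) A) L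
    rw [collapseFace_comm]
    exact hseq'

end ChordalPaper

open ChordalPaper in
/-- in a free sequence whose last face `E` (of dimension `d-1`) is the only
one whose unique containing facet at the time of removal has dimension `≥ d`, the face
`E` is free in `Σ` itself, the rest of the sequence is free in `Σ` collapsed at `E`,
and collapsing `E` first yields the same complex. -/
theorem stmt3 (n d : ℕ) (hd : 1 ≤ d) (S : Set (Finset (Fin n))) (hS : IsComplex S)
    (L : List (Finset (Fin n))) (E : Finset (Fin n))
    (hfree : IsFreeSeq S (L ++ [E]))
    (hcard : E.card = d)
    (hsmall : ∀ i (hi : i < L.length), ∀ F,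
      IsFacet (collapseList S (L.take i)) F → L.get ⟨i, hi⟩ ⊆ F → F.card ≤ d)
    (hbig : ∃ F, IsFacet (collapseList S L) F ∧ E ⊆ F ∧ d + 1 ≤ F.card) :
    IsFreeFace S E ∧ IsFreeSeq (collapseFace S E) L ∧
      collapseList (collapseFace S E) L = collapseList S (L ++ [E]) := by
  obtain ⟨h1, h2⟩ := stmt3_main d L S E hfree hcard hsmall hbig
  refine ⟨h1, h2, ?_⟩
  rw [collapseList_collapseFace]
  have happ : ∀ (M : List (Finset (Fin n))) (Γ : Set (Finset (Fin n))),
      collapseList Γ (M ++ [E]) = collapseFace (collapseList Γ M) E := by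
    intro M
    induction M with
    | nil => intro Γ; rfl
    | cons A M ih => intro Γ; exact ih (collapseFace Γ A)
  rw [happ]
end

section
/- A d-closure Γ on vertex set [n] is d-chordal if and only if Γ is d-collapsible. -/
/-!
Chordal ⇒ collapsible: run through a simplicial order, but collapse at each `E` instead of
deleting it. A collapse and a simplicial deletion at a `d`-face differ only by `E` itself, which
is a facet after the deletion, so at every stage the collapsed complex is the deleted one minus
some facets of size `d`; such missing facets never obstruct the next face from being free. Once
the order is exhausted only faces of size `≤ d` are left, and they are collapsed from the top.

Collapsible ⇒ chordal, by induction on `Γ`: in a `d`-collapsing sequence look at the first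
collapse, at `E` say, that removes a face of size `> d`. Its star is the interval below its
unique facet `F`, and removing the faces of size `> d` of that interval keeps `Γ` a complex that
contains the skeleton and stays `d`-collapsible (the earlier collapses only touched small faces,
and the small part of the star of `E` collapses from the top). The same faces are removed by
simplicial deletions: split on a vertex `x ∈ F \ E`, first remove the faces containing
`E ∪ {x}`, then those inside `F \ {x}`, until `E` has size `d`, where one deletion does it.
-/

namespace ChordalPaper

variable {n d : ℕ} {Γ Δ : Set (Finset (Fin n))} {E F : Finset (Fin n)}

def star (Γ : Set (Finset (Fin n))) (E : Finset (Fin n)) : Set (Finset (Fin n)) :=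
  {G ∈ Γ | E ⊆ G}

def bigStar (d : ℕ) (Γ : Set (Finset (Fin n))) (E : Finset (Fin n)) : Set (Finset (Fin n)) :=
  {G ∈ Γ | E ⊆ G ∧ d < G.card}

@[simp]
lemma mem_star {G : Finset (Fin n)} : G ∈ star Γ E ↔ G ∈ Γ ∧ E ⊆ G := Iff.rfl

@[simp]
lemma mem_bigStar {G : Finset (Fin n)} : G ∈ bigStar d Γ E ↔ G ∈ Γ ∧ E ⊆ G ∧ d < G.card :=
  Iff.rfl

section FreeFaces

lemma exists_isFacet_superset_s4 (hE : E ∈ Γ) : ∃ F, E ⊆ F ∧ IsFacet Γ F := by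
  obtain ⟨F, ⟨hF, hEF⟩, hmax⟩ :=
    Set.Finite.exists_maximalFor Finset.card {F | F ∈ Γ ∧ E ⊆ F} (Set.toFinite _) ⟨E, hE, le_rfl⟩
  exact ⟨F, hEF, hF, fun G hG hFG =>
    (Finset.eq_of_subset_of_card_le hFG (hmax ⟨hG, hEF.trans hFG⟩ (Finset.card_le_card hFG))).symm⟩

lemma IsFacet.of_subset {Γ' : Set (Finset (Fin n))} (h : IsFacet Γ F) (hΓ' : Γ' ⊆ Γ)
    (hF : F ∈ Γ') : IsFacet Γ' F :=
  ⟨hF, fun G hG => h.2 G (hΓ' hG)⟩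

lemma isFacet_srDel (hE : E ∈ Γ) : IsFacet (srDel Γ E) E :=
  ⟨⟨hE, lt_irrefl E⟩, fun _ hG hEG => (eq_of_le_of_not_lt hEG hG.2).symm⟩

lemma isFacet_of_isGreatest_star (h : IsGreatest (star Γ E) F) : IsFacet Γ F :=
  ⟨h.1.1, fun _ hG hFG => le_antisymm (h.2 ⟨hG, h.1.2.trans hFG⟩) hFG⟩

lemma isGreatest_star_of_subset {Γ' : Set (Finset (Fin n))} (h : IsGreatest (star Γ E) F)
    (hΓ' : Γ' ⊆ Γ) (hF : F ∈ Γ') : IsGreatest (star Γ' E) F :=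
  ⟨⟨hF, h.1.2⟩, fun _ hG => h.2 ⟨hΓ' hG.1, hG.2⟩⟩

lemma isFreeFace_of_isGreatest_star (hE : E ∈ Γ) (h : IsGreatest (star Γ E) F) :
    IsFreeFace Γ E :=
  ⟨hE, F, ⟨isFacet_of_isGreatest_star h, h.1.2⟩, fun _ ⟨hF', hEF'⟩ =>
    (hF'.2 F h.1.1 (h.2 ⟨hF'.1, hEF'⟩)).symm⟩

lemma IsFreeFace.exists_isGreatest_star (h : IsFreeFace Γ E) : ∃ F, IsGreatest (star Γ E) F := by
  obtain ⟨-, F, ⟨hF, hEF⟩, huniq⟩ := h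
  refine ⟨F, ⟨hF.1, hEF⟩, fun G ⟨hG, hEG⟩ => ?_⟩
  obtain ⟨H, hGH, hH⟩ := exists_isFacet_superset_s4 hG
  exact huniq H ⟨hH, hEG.trans hGH⟩ ▸ hGH

end FreeFaces

section Collapsing

lemma collapseFace_ssubset (hE : E ∈ Δ) : collapseFace Δ E ⊂ Δ :=
  (Set.ssubset_iff_of_subset fun _ hG => hG.1).2 ⟨E, hE, fun h => h.2 subset_rfl⟩

lemma collapseFace_diff (W : Set (Finset (Fin n))) :
    collapseFace (Δ \ W) E = collapseFace Δ E \ W := by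
  ext G
  simp only [collapseFace, Set.mem_sdiff, Set.mem_ofPred_eq]
  tauto

lemma collapsible_iff : Collapsible d Δ ↔
    Δ = ∅ ∨ ∃ E, E.card ≤ d ∧ IsFreeFace Δ E ∧ Collapsible d (collapseFace Δ E) := by
  constructor
  · rintro ⟨_ | ⟨E, L⟩, hL, hsmall, hnil⟩
    · exact Or.inl hnil
    · obtain ⟨hEd, hLd⟩ := List.forall_mem_cons.1 hsmall
      exact Or.inr ⟨E, hEd, hL.1, L, hL.2, hLd, hnil⟩
  · rintro (rfl | ⟨E, hEd, hE, L, hL, hLd, hnil⟩)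
    · exact ⟨[], trivial, List.forall_mem_nil _, rfl⟩
    · exact ⟨E :: L, ⟨hE, hL⟩, List.forall_mem_cons.2 ⟨hEd, hLd⟩, hnil⟩

lemma Collapsible.of_isGreatest_star (hE : E ∈ Δ) (hEd : E.card ≤ d)
    (hF : IsGreatest (star Δ E) F) (h : Collapsible d (collapseFace Δ E)) : Collapsible d Δ :=
  collapsible_iff.2 <| Or.inr ⟨E, hEd, isFreeFace_of_isGreatest_star hE hF, h⟩

lemma Collapsible.of_diff {U : Set (Finset (Fin n))} (hU : ∀ G ∈ U, G.card ≤ d)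
    (hup : ∀ G ∈ U, ∀ H ∈ Δ, G ⊆ H → H ∈ U) (h : Collapsible d (Δ \ U)) : Collapsible d Δ := by
  induction Δ using WellFoundedLT.induction with
  | _ Δ ih =>
  rcases (Δ ∩ U).eq_empty_or_nonempty with hΔU | hΔU
  · rwa [sdiff_eq_left.2 (Set.disjoint_iff_inter_eq_empty.2 hΔU)] at h
  obtain ⟨G, ⟨hGΔ, hGU⟩, hGmax⟩ := Set.exists_max_image _ Finset.card (Set.toFinite _) hΔU
  have hG : IsGreatest (star Δ G) G := ⟨⟨hGΔ, subset_rfl⟩, fun H ⟨hH, hGH⟩ =>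
    (Finset.eq_of_subset_of_card_le hGH (hGmax H ⟨hH, hup G hGU H hH hGH⟩)).ge⟩
  refine .of_isGreatest_star hGΔ (hU G hGU) hG <|
    ih _ (collapseFace_ssubset hGΔ) (fun K hK H hH => hup K hK H hH.1) ?_
  convert h using 1
  ext H
  simp only [collapseFace, Set.mem_sdiff, Set.mem_ofPred_eq, and_congr_left_iff,
    and_iff_left_iff_imp]
  exact fun hHU hH hGH => hHU (hup G hGU H hH hGH)

lemma collapsible_of_forall_card_le (h : ∀ G ∈ Δ, G.card ≤ d) : Collapsible d Δ :=
  .of_diff h (fun _ _ H hH _ => hH) <| by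
    rw [Set.sdiff_self]
    exact collapsible_iff.2 (Or.inl rfl)

end Collapsing

section ChordalToCollapsible

lemma IsSimpOrder.collapsible_of_subset {M : List (Finset (Fin n))} (hM : IsSimpOrder d Γ M)
    (hΔ : Δ ⊆ Γ) (hrem : ∀ G ∈ Γ, G ∉ Δ → G.card ≤ d ∧ IsFacet Γ G) : Collapsible d Δ := by
  induction M generalizing Γ Δ with
  | nil =>
    refine collapsible_of_forall_card_le fun G hG => ?_
    have hGΓ := hΔ hG
    rwa [show Γ = fullSkel n d from hM] at hGΓ
  | cons E M ih =>
    obtain ⟨hEd, hE, hEnf, hM⟩ := hM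
    obtain ⟨F, hF⟩ := hE.exists_isGreatest_star
    have hEF : E ⊂ F := hF.1.2.ssubset_of_ne fun h => hEnf (h ▸ isFacet_of_isGreatest_star hF)
    have hEΔ : E ∈ Δ := by_contra fun h => hEnf (hrem E hE.1 h).2
    have hFΔ : F ∈ Δ := by_contra fun h => by
      have := (hrem F hF.1.1 h).1
      have := Finset.card_lt_card hEF
      omega
    refine .of_isGreatest_star hEΔ hEd.le (isGreatest_star_of_subset hF hΔ hFΔ) (ih hM ?_ ?_)
    · exact fun G ⟨hG, hEG⟩ => ⟨hΔ hG, fun h => hEG h.le⟩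
    · rintro G ⟨hG, hEG⟩ hGΔ'
      by_cases hGΔ : G ∈ Δ
      · obtain rfl : E = G := eq_of_le_of_not_lt (not_not.1 fun h => hGΔ' ⟨hGΔ, h⟩) hEG
        exact ⟨hEd.le, isFacet_srDel hG⟩
      · obtain ⟨hGd, hGf⟩ := hrem G hG hGΔ
        exact ⟨hGd, hGf.of_subset (fun _ hK => hK.1) ⟨hG, hEG⟩⟩

lemma IsSimpOrder.collapsible {M : List (Finset (Fin n))} (hM : IsSimpOrder d Γ M) :
    Collapsible d Γ :=
  hM.collapsible_of_subset subset_rfl fun _ hG h => (h hG).elim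

end ChordalToCollapsible

section CollapsibleToChordal

lemma isComplex_diff_bigStar (hΓ : IsComplex Γ) (E : Finset (Fin n)) :
    IsComplex (Γ \ bigStar d Γ E) := fun F ⟨hF, hFE⟩ F' hF'F =>
  ⟨hΓ F hF F' hF'F, fun ⟨_, hEF', hF'd⟩ =>
    hFE ⟨hF, hEF'.trans hF'F, hF'd.trans_le (Finset.card_le_card hF'F)⟩⟩

lemma bigStar_diff_bigStar {E' : Finset (Fin n)} (hEE' : E ⊆ E') :
    (Γ \ bigStar d Γ E') \ bigStar d (Γ \ bigStar d Γ E') E = Γ \ bigStar d Γ E := by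
  ext G
  simp only [Set.mem_sdiff, mem_bigStar]
  have : E' ⊆ G → E ⊆ G := hEE'.trans
  tauto

lemma srDel_eq_diff_bigStar (hE : E.card = d) : srDel Γ E = Γ \ bigStar d Γ E := by
  ext G
  simp only [srDel, Set.mem_ofPred_eq, Set.mem_sdiff, mem_bigStar, and_congr_right_iff]
  refine fun hG => not_congr ⟨fun h => ⟨hG, h.subset, hE ▸ Finset.card_lt_card h⟩, ?_⟩
  exact fun ⟨_, hEG, hGd⟩ => hEG.ssubset_of_ne (by rintro rfl; omega)

lemma isSimpOrder_cons (hΓ : IsComplex Γ) (hE : E.card = d) (hF : IsGreatest (bigStar d Γ E) F)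
    {L : List (Finset (Fin n))} (h : IsSimpOrder d (Γ \ bigStar d Γ E) L) :
    IsSimpOrder d Γ (E :: L) := by
  obtain ⟨⟨hFΓ, hEF, hFd⟩, hFub⟩ := hF
  have hEΓ : E ∈ Γ := hΓ F hFΓ E hEF
  have hstar : IsGreatest (star Γ E) F := by
    refine ⟨⟨hFΓ, hEF⟩, fun G ⟨hG, hEG⟩ => ?_⟩
    rcases eq_or_ne E G with rfl | hne
    · exact hEF
    · exact hFub ⟨hG, hEG, hE ▸ Finset.card_lt_card (hEG.ssubset_of_ne hne)⟩
  refine ⟨hE, isFreeFace_of_isGreatest_star hEΓ hstar, fun hEf => ?_, ?_⟩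
  · have := hEf.2 F hFΓ hEF
    subst this
    omega
  · rwa [srDel_eq_diff_bigStar hE]

lemma exists_isSimpOrder_of_diff_bigStar {Γ : Set (Finset (Fin n))} {E F : Finset (Fin n)}
    (hΓ : IsComplex Γ) (hE : E.card ≤ d)
    (hF : F ∈ star Γ E) (hFub : F ∈ upperBounds (bigStar d Γ E))
    (h : ∃ L, IsSimpOrder d (Γ \ bigStar d Γ E) L) : ∃ L, IsSimpOrder d Γ L := by
  rcases (bigStar d Γ E).eq_empty_or_nonempty with hemp | ⟨G, hG⟩
  · rwa [hemp, Set.sdiff_empty] at h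
  have hFd : d < F.card := hG.2.2.trans_le (Finset.card_le_card (hFub hG))
  rcases hE.eq_or_lt with hEd | hEd
  · obtain ⟨L, hL⟩ := h
    exact ⟨E :: L, isSimpOrder_cons hΓ hEd ⟨⟨hF.1, hF.2, hFd⟩, hFub⟩ hL⟩
  obtain ⟨x, hxF, hxE⟩ := Finset.exists_of_ssubset
    (hF.2.ssubset_of_ne (by rintro rfl; omega))
  have hxEcard := Finset.card_insert_of_notMem hxE
  have hxFcard := Finset.card_erase_of_mem hxF
  have hEFx : E ⊆ F.erase x := Finset.subset_erase.2 ⟨hF.2, hxE⟩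
  have hFxcard := Finset.card_le_card hEFx
  have hxEF := Finset.card_le_card (Finset.insert_subset hxF hF.2)
  have hFx : F.erase x ∈ star (Γ \ bigStar d Γ (insert x E)) E :=
    ⟨⟨hΓ F hF.1 _ (F.erase_subset x), fun hbig =>
      Finset.notMem_erase x F (hbig.2.1 (Finset.mem_insert_self x E))⟩, hEFx⟩
  have hFxub : F.erase x ∈ upperBounds (bigStar d (Γ \ bigStar d Γ (insert x E)) E) := by
    rintro G ⟨⟨hG, hxG⟩, hEG, hGd⟩
    exact Finset.subset_erase.2
      ⟨hFub ⟨hG, hEG, hGd⟩, fun hx => hxG ⟨hG, Finset.insert_subset hx hEG, hGd⟩⟩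
  have h₁ := exists_isSimpOrder_of_diff_bigStar (isComplex_diff_bigStar hΓ _) hE hFx hFxub
    (by rwa [bigStar_diff_bigStar (Finset.subset_insert x E)])
  exact exists_isSimpOrder_of_diff_bigStar (E := insert x E) hΓ (by omega)
    ⟨hF.1, Finset.insert_subset hxF hF.2⟩
    (fun G hG => hFub ⟨hG.1, (Finset.subset_insert x E).trans hG.2.1, hG.2.2⟩) h₁
termination_by F.card - E.card

lemma Collapsible.diff_of_collapseFace {W : Set (Finset (Fin n))} (hE : E ∈ Δ \ W)
    (hEd : E.card ≤ d) (hF : IsGreatest (star Δ E) F) (hFW : F ∉ W)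
    (h : Collapsible d (collapseFace Δ E \ W)) : Collapsible d (Δ \ W) :=
  .of_isGreatest_star hE hEd (isGreatest_star_of_subset hF Set.sdiff_subset ⟨hF.1.1, hFW⟩)
    (by rwa [collapseFace_diff])

lemma Collapsible.exists_isGreatest_bigStar (h : Collapsible d Δ) (hbig : ∃ B ∈ Δ, d < B.card) :
    ∃ E F, E.card ≤ d ∧ IsGreatest (bigStar d Δ E) F ∧ Collapsible d (Δ \ bigStar d Δ E) := by
  induction Δ using WellFoundedLT.induction with
  | _ Δ ih =>
  obtain ⟨B, hB, hBd⟩ := hbig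
  obtain rfl | ⟨E, hEd, hE, hcol⟩ := collapsible_iff.1 h
  · exact absurd hB (Set.notMem_empty B)
  obtain ⟨F, hF⟩ := hE.exists_isGreatest_star
  by_cases hFd : d < F.card
  · refine ⟨E, F, hEd, ⟨⟨hF.1.1, hF.1.2, hFd⟩, fun G hG => hF.2 ⟨hG.1, hG.2.1⟩⟩, ?_⟩
    refine .of_diff (U := {G | E ⊆ G ∧ G.card ≤ d}) (fun G hG => hG.2) ?_ ?_
    · rintro G ⟨hEG, -⟩ H ⟨hH, hHbig⟩ hGH
      exact ⟨hEG.trans hGH, not_lt.1 fun hHd => hHbig ⟨hH, hEG.trans hGH, hHd⟩⟩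
    · convert hcol using 1
      ext G
      simp only [collapseFace, Set.mem_sdiff, mem_bigStar, Set.mem_ofPred_eq]
      have := lt_or_ge d G.card
      tauto
  push Not at hFd
  have hsmall : ∀ G ∈ Δ, E ⊆ G → G.card ≤ d := fun G hG hEG =>
    (Finset.card_le_card (hF.2 ⟨hG, hEG⟩)).trans hFd
  have hbigStar : ∀ E₀, bigStar d (collapseFace Δ E) E₀ = bigStar d Δ E₀ := fun E₀ => by
    ext G
    simp only [mem_bigStar, collapseFace, Set.mem_ofPred_eq]
    exact ⟨fun ⟨⟨hG, _⟩, hE₀G, hGd⟩ => ⟨hG, hE₀G, hGd⟩,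
      fun ⟨hG, hE₀G, hGd⟩ => ⟨⟨hG, fun hEG => (hsmall G hG hEG).not_gt hGd⟩, hE₀G, hGd⟩⟩
  obtain ⟨E₀, F₀, hE₀, hF₀, hcol₀⟩ := ih _ (collapseFace_ssubset hE.1) hcol
    ⟨B, ⟨hB, fun hEB => (hsmall B hB hEB).not_gt hBd⟩, hBd⟩
  rw [hbigStar] at hF₀ hcol₀
  refine ⟨E₀, F₀, hE₀, hF₀, .diff_of_collapseFace ⟨hE.1, ?_⟩ hEd hF ?_ hcol₀⟩
  · exact fun hEbig => hEbig.2.2.not_ge hEd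
  · exact fun hFbig => hFbig.2.2.not_ge hFd

lemma exists_isSimpOrder_of_collapsible (hΓ : IsComplex Γ) (hskel : fullSkel n d ⊆ Γ)
    (h : Collapsible d Γ) : ∃ L, IsSimpOrder d Γ L := by
  induction Γ using WellFoundedLT.induction with
  | _ Γ ih =>
  by_cases hbig : ∃ B ∈ Γ, d < B.card
  · obtain ⟨E, F, hE, hF, hcol⟩ := h.exists_isGreatest_bigStar hbig
    refine exists_isSimpOrder_of_diff_bigStar hΓ hE ⟨hF.1.1, hF.1.2.1⟩ hF.2 <|
      ih _ (Set.sdiff_ssubset_left_iff.2 ⟨F, hF.1.1, hF.1⟩) (isComplex_diff_bigStar hΓ E)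
        (fun G hG => ⟨hskel hG, fun hGbig => hGbig.2.2.not_ge hG⟩) hcol
  · push Not at hbig
    exact ⟨[], Set.Subset.antisymm hbig hskel⟩

end CollapsibleToChordal

end ChordalPaper

open ChordalPaper in
theorem stmt4_general (n d : ℕ) (Γ : Set (Finset (Fin n))) (hΓ : IsComplex Γ)
    (hclo : Γ = dClosure d Γ) :
    DChordal d Γ ↔ Collapsible d Γ := by
  rw [DChordal, ← hclo]
  exact ⟨fun ⟨_, hL⟩ => hL.collapsible,
    exists_isSimpOrder_of_collapsible hΓ (by rw [hclo]; exact fun _ => Or.inl)⟩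

open ChordalPaper in
/-- a `d`-closure is `d`-chordal iff it is `d`-collapsible. -/
theorem stmt4 (n d : ℕ) (hd : 1 ≤ d) (Γ : Set (Finset (Fin n))) (hΓ : IsComplex Γ)
    (hclo : Γ = dClosure d Γ) :
    DChordal d Γ ↔ Collapsible d Γ :=
  stmt4_general n d Γ hΓ hclo
end

section
/- If E is a free face of a simplicial complex Γ with dim E ≤ d−1, then there is a free sequence E_1,…,E_r of faces of dimension ≤ d−1 of the d-closure Σ = Δ_d(Γ) such that collapsing Σ along this sequence yields Σ∖E (all faces of Σ containing E removed). -/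
/-!
Let `F₀` be the unique facet of `Γ` containing `E`. A face `H` of `Δ_d(Γ)` with `E ⊆ H` and
`|H| > d` lies in `F₀`: each `v ∈ H` lies in a `(d+1)`-subset of `H` containing `E`, which is a
face of `Γ` and hence lies in `F₀`. So the faces of `Δ_d(Γ)` containing `E` but not contained in
`F₀` have size `≤ d`, and they form an up-set; removing them one at a time, largest first,
each one is a free face. Afterwards `F₀` is the only facet above `E`, and collapsing `E` finishes.
-/

namespace ChordalPaper

variable {n : ℕ}

lemma collapseList_append (Γ : Set (Finset (Fin n))) (L₁ L₂ : List (Finset (Fin n))) :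
    collapseList Γ (L₁ ++ L₂) = collapseList (collapseList Γ L₁) L₂ := by
  induction L₁ generalizing Γ with
  | nil => rfl
  | cons E L ih => exact ih (collapseFace Γ E)

lemma IsFreeSeq.append {Γ : Set (Finset (Fin n))} {L₁ L₂ : List (Finset (Fin n))}
    (h₁ : IsFreeSeq Γ L₁) (h₂ : IsFreeSeq (collapseList Γ L₁) L₂) : IsFreeSeq Γ (L₁ ++ L₂) := by
  induction L₁ generalizing Γ with
  | nil => exact h₂
  | cons E L ih => exact ⟨h₁.1, ih h₁.2 h₂⟩

lemma exists_isFacet_superset_s7 {Γ : Set (Finset (Fin n))} {T : Finset (Fin n)} (hT : T ∈ Γ) :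
    ∃ F, IsFacet Γ F ∧ T ⊆ F := by
  obtain ⟨F, hTF, hF⟩ := Finite.exists_le_maximal (p := (· ∈ Γ)) hT
  exact ⟨F, ⟨hF.1, fun G hG hFG => le_antisymm (hF.2 hG hFG) hFG⟩, hTF⟩

lemma IsFreeFace.subset_of_subset {Γ : Set (Finset (Fin n))} {E F T : Finset (Fin n)}
    (hE : IsFreeFace Γ E) (hF : IsFacet Γ F) (hEF : E ⊆ F) (hT : T ∈ Γ) (hET : E ⊆ T) :
    T ⊆ F := by
  obtain ⟨F', hF', hTF'⟩ := exists_isFacet_superset_s7 hT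
  exact hE.2.unique ⟨hF, hEF⟩ ⟨hF', hET.trans hTF'⟩ ▸ hTF'

lemma isFreeFace_of_forall_subset {C : Set (Finset (Fin n))} {E F : Finset (Fin n)}
    (hE : E ∈ C) (hF : F ∈ C) (hEF : E ⊆ F) (hmax : ∀ H ∈ C, E ⊆ H → H ⊆ F) :
    IsFreeFace C E := by
  have hFfacet : IsFacet C F :=
    ⟨hF, fun H hH hFH => le_antisymm (hmax H hH (hEF.trans hFH)) hFH⟩
  exact ⟨hE, F, ⟨hFfacet, hEF⟩, fun F' ⟨hF', hEF'⟩ => (hF'.2 F hF (hmax F' hF'.1 hEF')).symm⟩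

/-- A largest face of the up-set `S` is maximal in `C`, hence free; collapse it and recurse. -/
lemma exists_isFreeSeq_collapseList_eq_sdiff (S : Finset (Finset (Fin n))) :
    ∀ C : Set (Finset (Fin n)), (∀ G ∈ S, G ∈ C) → (∀ G ∈ S, ∀ H ∈ C, G ⊆ H → H ∈ S) →
      ∃ L, IsFreeSeq C L ∧ (∀ G ∈ L, G ∈ S) ∧ collapseList C L = {F ∈ C | F ∉ S} := by
  classical
  refine Finset.induction_on_max_value Finset.card S
    (fun C _ _ => ⟨[], trivial, by simp, by simp [collapseList]⟩) ?_
  intro G S hGS hmax ih C hSC hup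
  have hGC := hSC G (Finset.mem_insert_self G S)
  have honly : ∀ H ∈ C, G ⊆ H → H = G := fun H hH hGH => by
    rcases Finset.mem_insert.mp (hup G (Finset.mem_insert_self G S) H hH hGH) with h | h
    · exact h
    · exact (Finset.eq_of_subset_of_card_le hGH (hmax H h)).symm
  have hcollapse : collapseFace C G = {F ∈ C | F ≠ G} := by
    ext F
    exact and_congr_right fun hF => ⟨fun h he => h (he ▸ subset_rfl), mt (honly F hF)⟩
  obtain ⟨L, hL, hLS, hcl⟩ := ih {F ∈ C | F ≠ G}
    (fun G' hG' => ⟨hSC G' (Finset.mem_insert_of_mem hG'), ne_of_mem_of_not_mem hG' hGS⟩)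
    (fun G' hG' H hH hG'H => (Finset.mem_insert.mp
      (hup G' (Finset.mem_insert_of_mem hG') H hH.1 hG'H)).resolve_left hH.2)
  refine ⟨G :: L, ⟨isFreeFace_of_forall_subset hGC hGC subset_rfl
    fun H hH hGH => (honly H hH hGH).le, hcollapse ▸ hL⟩, ?_, ?_⟩
  · exact List.forall_mem_cons.mpr
      ⟨Finset.mem_insert_self G S, fun G' hG' => Finset.mem_insert_of_mem (hLS G' hG')⟩
  · change collapseList (collapseFace C G) L = _
    rw [hcollapse, hcl]
    ext F
    simp only [Set.mem_ofPred_eq, Finset.mem_insert, not_or, and_assoc]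

lemma mem_dClosure_of_mem {d : ℕ} {Γ : Set (Finset (Fin n))} (hΓ : IsComplex Γ)
    {F : Finset (Fin n)} (hF : F ∈ Γ) : F ∈ dClosure d Γ :=
  Or.inr fun G hGF _ => hΓ F hF G hGF

lemma subset_of_mem_dClosure {d : ℕ} {Γ : Set (Finset (Fin n))} {E F H : Finset (Fin n)}
    (hF : ∀ T ∈ Γ, E ⊆ T → T ⊆ F) (hE : E.card ≤ d) (hH : H ∈ dClosure d Γ) (hEH : E ⊆ H)
    (hHcard : d < H.card) : H ⊆ F := by
  have hsubsets : ∀ G ⊆ H, G.card = d + 1 → G ∈ Γ := hH.resolve_left (by omega)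
  intro v hv
  obtain ⟨T, hvET, hTH, hTcard⟩ := Finset.exists_subsuperset_card_eq
    (Finset.insert_subset hv hEH) ((Finset.card_insert_le v E).trans (by omega)) hHcard
  exact hF T (hsubsets T hTH hTcard) ((Finset.subset_insert v E).trans hvET)
    (hvET (Finset.mem_insert_self v E))

end ChordalPaper

open ChordalPaper in
theorem stmt7_general (n d : ℕ) (Γ : Set (Finset (Fin n))) (hΓ : IsComplex Γ)
    (E : Finset (Fin n)) (hE : IsFreeFace Γ E) (hcard : E.card ≤ d) :
    ∃ L : List (Finset (Fin n)), IsFreeSeq (dClosure d Γ) L ∧ (∀ E' ∈ L, E'.card ≤ d) ∧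
      collapseList (dClosure d Γ) L = {F ∈ dClosure d Γ | ¬ E ⊆ F} := by
  classical
  obtain ⟨F₀, ⟨hF₀, hEF₀⟩, -⟩ := hE.2
  have hbig : ∀ H ∈ dClosure d Γ, E ⊆ H → d < H.card → H ⊆ F₀ :=
    fun H => subset_of_mem_dClosure (fun T => hE.subset_of_subset hF₀ hEF₀) hcard
  set S := Finset.univ.filter fun G => G ∈ dClosure d Γ ∧ E ⊆ G ∧ ¬ G ⊆ F₀
  obtain ⟨L, hL, hLS, hcl⟩ := exists_isFreeSeq_collapseList_eq_sdiff S (dClosure d Γ)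
    (fun G hG => (Finset.mem_filter.mp hG).2.1)
    (fun G hG H hH hGH => by
      obtain ⟨-, -, hEG, hGF₀⟩ := Finset.mem_filter.mp hG
      exact Finset.mem_filter.mpr
        ⟨Finset.mem_univ H, hH, hEG.trans hGH, fun h => hGF₀ (hGH.trans h)⟩)
  have hfree : IsFreeFace {F ∈ dClosure d Γ | F ∉ S} E := by
    refine isFreeFace_of_forall_subset ⟨Or.inl hcard, by simp [S, hEF₀]⟩
      ⟨mem_dClosure_of_mem hΓ hF₀.1, by simp [S]⟩ hEF₀ fun H ⟨hH, hHS⟩ hEH => ?_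
    by_contra hHF₀
    exact hHS (by simp [S, hH, hEH, hHF₀])
  refine ⟨L ++ [E], hL.append (hcl ▸ ⟨hfree, trivial⟩), fun G hG => ?_, ?_⟩
  · rcases List.mem_append.mp hG with hG | hG
    · obtain ⟨-, hGΔ, hEG, hGF₀⟩ := Finset.mem_filter.mp (hLS G hG)
      exact not_lt.mp fun hlt => hGF₀ (hbig G hGΔ hEG hlt)
    · exact List.mem_singleton.mp hG ▸ hcard
  · rw [collapseList_append, hcl]
    ext F
    simp only [collapseList, collapseFace, Set.mem_ofPred_eq, S, Finset.mem_filter,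
      Finset.mem_univ, true_and]
    tauto

open ChordalPaper in
/-- a free face `E` of `Γ` of dimension `≤ d-1` gives rise to a free
sequence of the `d`-closure, of faces of dimension `≤ d-1`, collapsing it to
`Δ_d(Γ) ∖ E`. -/
theorem stmt7 (n d : ℕ) (hd : 1 ≤ d) (Γ : Set (Finset (Fin n))) (hΓ : IsComplex Γ)
    (E : Finset (Fin n)) (hE : IsFreeFace Γ E) (hcard : E.card ≤ d) :
    ∃ L : List (Finset (Fin n)), IsFreeSeq (dClosure d Γ) L ∧ (∀ E' ∈ L, E'.card ≤ d) ∧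
      collapseList (dClosure d Γ) L = {F ∈ dClosure d Γ | ¬ E ⊆ F} :=
  stmt7_general n d Γ hΓ E hE hcard
end

section
/- Let Γ be a simplicial complex with vertex set [n], let t (resp. s) be the minimum (resp. maximum) dimension of a minimal nonface of Γ, and let r = dim Γ. Then Γ is chordal if and only if Γ is d-chordal for every d with t ≤ d ≤ min{r, s}. -/
namespace ChordalPaper

/-!
For `d > r` the `d`-closure of `Γ` is the `(d-1)`-skeleton, and for `d < t` it is the full
simplex, which is `d`-chordal. For `d ≥ s` every minimal nonface has at most `d + 1` vertices,
so `Δ_d(Γ) = Γ ∪ ⟨[n]⟩^{[d-1]}`, and a simplicial order `E₁, …, E_k` of `Δ_d(Γ)` yields one of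
`Δ_{d+1}(Γ)`: with `Fᵢ` the facet containing `Eᵢ` at its turn, delete block by block the
`(d+1)`-sets `D` with `Eᵢ ⊆ D ⊆ Fᵢ` that miss some vertex of `Fᵢ` above all of `D \ Eᵢ`, inside
a block by increasing `max (D \ Eᵢ)`. At the turn of such a `D` the surviving faces containing it
are exactly the subsets of `D ∪ {y ∈ Fᵢ \ Eᵢ | y > max (D \ Eᵢ)}`, so `D` is free and not a
facet. Hence `d`-chordality propagates upwards from `d = s`.
-/

variable {n : ℕ}

lemma max_lt_coe_of_forall_lt {α : Type*} [LinearOrder α] {s : Finset α} {y : α}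
    (h : ∀ a ∈ s, a < y) : s.max < y := by
  rw [Finset.max_eq_sup_coe, Finset.sup_lt_iff (WithBot.bot_lt_coe y)]
  exact fun a ha => WithBot.coe_lt_coe.mpr (h a ha)

lemma exists_isFacet_superset_s11 (Δ : Set (Finset (Fin n))) {G : Finset (Fin n)} (hG : G ∈ Δ) :
    ∃ H, IsFacet Δ H ∧ G ⊆ H := by
  obtain ⟨H, hGH, hH⟩ := (Set.toFinite Δ).exists_le_maximal hG
  exact ⟨H, ⟨hH.prop, fun K hK hHK => (hH.le_of_ge hK hHK).antisymm hHK⟩, hGH⟩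

lemma IsFreeFace.exists_mem_forall_subset {Δ : Set (Finset (Fin n))} {E : Finset (Fin n)}
    (h : IsFreeFace Δ E) : ∃ F ∈ Δ, ∀ G ∈ Δ, E ⊆ G → G ⊆ F := by
  obtain ⟨F, ⟨hF, -⟩, huniq⟩ := h.2
  refine ⟨F, hF.1, fun G hG hEG => ?_⟩
  obtain ⟨H, hH, hGH⟩ := exists_isFacet_superset_s11 Δ hG
  exact huniq H ⟨hH, hEG.trans hGH⟩ ▸ hGH

lemma isFreeFace_and_not_isFacet_of_forall_subset {Δ : Set (Finset (Fin n))}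
    {D F : Finset (Fin n)} (hD : D ∈ Δ) (hF : F ∈ Δ) (hDF : D ⊂ F)
    (hmax : ∀ G ∈ Δ, D ⊆ G → G ⊆ F) :
    IsFreeFace Δ D ∧ ¬ IsFacet Δ D := by
  have hfacet : IsFacet Δ F :=
    ⟨hF, fun G hG hFG => (hmax G hG (hDF.subset.trans hFG)).antisymm hFG⟩
  refine ⟨⟨hD, F, ⟨hfacet, hDF.subset⟩, fun H ⟨hH, hDH⟩ => ?_⟩, fun hDfacet => ?_⟩
  · exact (hH.2 F hF (hmax H hH.1 hDH)).symm
  · exact hDF.ne (hDfacet.2 F hF hDF.subset).symm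

def srDelSet (Γ : Set (Finset (Fin n))) (S : Set (Finset (Fin n))) : Set (Finset (Fin n)) :=
  {F ∈ Γ | ∀ E ∈ S, ¬ E ⊂ F}

lemma srDelList_eq_srDelSet (Γ : Set (Finset (Fin n))) (L : List (Finset (Fin n))) :
    srDelList Γ L = srDelSet Γ {E | E ∈ L} := by
  induction L generalizing Γ with
  | nil => simp [srDelList, srDelSet]
  | cons E L ih =>
    ext F
    simp [srDelList, ih, srDelSet, srDel, and_assoc]

lemma mem_srDelList_take_iff (Δ : Set (Finset (Fin n))) (L : List (Finset (Fin n))) (i : ℕ)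
    (G : Finset (Fin n)) :
    G ∈ srDelList Δ (L.take i) ↔ G ∈ Δ ∧ ∀ j < i, j < L.length → ¬ L.getD j ∅ ⊂ G := by
  simp only [srDelList_eq_srDelSet, srDelSet, Set.mem_ofPred_eq, List.mem_take_iff_getElem,
    lt_min_iff]
  refine and_congr_right fun _ => ⟨fun h j hji hjL => ?_, fun h E ⟨j, hj, hjE⟩ => ?_⟩
  · exact h _ ⟨j, ⟨hji, hjL⟩, (List.getD_eq_getElem L ∅ hjL).symm⟩
  · exact hjE ▸ List.getD_eq_getElem L ∅ hj.2 ▸ h j hj.1 hj.2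

lemma IsSimpOrder.card_and_isFreeFace_getD {d : ℕ} :
    ∀ {Δ : Set (Finset (Fin n))} {L : List (Finset (Fin n))}, IsSimpOrder d Δ L →
      ∀ {i : ℕ}, i < L.length →
        (L.getD i ∅).card = d ∧ IsFreeFace (srDelList Δ (L.take i)) (L.getD i ∅)
  | _, _ :: _, h, 0, _ => ⟨h.1, h.2.1⟩
  | _, _ :: L, h, _ + 1, hi =>
    IsSimpOrder.card_and_isFreeFace_getD (L := L) h.2.2.2 (Nat.lt_of_succ_lt_succ hi)

lemma IsSimpOrder.srDelList_eq {d : ℕ} :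
    ∀ {Δ : Set (Finset (Fin n))} {L : List (Finset (Fin n))}, IsSimpOrder d Δ L →
      srDelList Δ L = fullSkel n d
  | _, [], h => h
  | _, _ :: L, h => IsSimpOrder.srDelList_eq (L := L) h.2.2.2

lemma IsSimpOrder.exists_getD_ssubset {d : ℕ} {Δ : Set (Finset (Fin n))}
    {L : List (Finset (Fin n))} (hL : IsSimpOrder d Δ L) {G : Finset (Fin n)} (hG : G ∈ Δ)
    (hcard : d < G.card) : ∃ j < L.length, L.getD j ∅ ⊂ G := by
  have hGdel : G ∉ srDelSet Δ {E | E ∈ L} := by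
    rw [← srDelList_eq_srDelSet, hL.srDelList_eq]
    exact fun h : G.card ≤ d => by omega
  simp only [srDelSet, Set.mem_ofPred_eq, not_and, not_forall, not_not] at hGdel
  obtain ⟨E, hEL, hEG⟩ := hGdel hG
  obtain ⟨j, hj, rfl⟩ := List.mem_iff_getElem.mp hEL
  exact ⟨j, hj, (List.getD_eq_getElem L ∅ hj).symm ▸ hEG⟩

lemma isSimpOrder_of_forall_append {d : ℕ} :
    ∀ {Δ : Set (Finset (Fin n))} {L : List (Finset (Fin n))},
      (∀ L₁ D L₂, L = L₁ ++ D :: L₂ →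
        D.card = d ∧ IsFreeFace (srDelList Δ L₁) D ∧ ¬ IsFacet (srDelList Δ L₁) D) →
      srDelList Δ L = fullSkel n d → IsSimpOrder d Δ L
  | _, [], _, hfin => hfin
  | _, E :: L, h, hfin =>
    ⟨(h [] E L rfl).1, (h [] E L rfl).2.1, (h [] E L rfl).2.2,
      isSimpOrder_of_forall_append (fun L₁ D L₂ hL => h (E :: L₁) D L₂ (by simp [hL])) hfin⟩

lemma exists_isSimpOrder_of_priority {d : ℕ} {β : Type*} [LinearOrder β]
    (Δ : Set (Finset (Fin n))) (𝒟 : Finset (Finset (Fin n))) (π : Finset (Fin n) → β)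
    (hcard : ∀ D ∈ 𝒟, D.card = d)
    -- `S` stands for the faces deleted before `D`; ties in `π` may be broken either way.
    (hfree : ∀ D ∈ 𝒟, ∀ S : Set (Finset (Fin n)),
      (∀ D' ∈ 𝒟, π D' < π D → D' ∈ S) → (∀ D' ∈ S, D' ∈ 𝒟 ∧ π D' ≤ π D ∧ D' ≠ D) →
      IsFreeFace (srDelSet Δ S) D ∧ ¬ IsFacet (srDelSet Δ S) D)
    (hskel : srDelSet Δ 𝒟 = fullSkel n d) :
    ∃ L, IsSimpOrder d Δ L := by
  set L := 𝒟.toList.mergeSort (fun a b => π a ≤ π b)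
  have hmem : ∀ D, D ∈ L ↔ D ∈ 𝒟 := fun D => List.mem_mergeSort.trans Finset.mem_toList
  have hsorted : L.Pairwise (fun a b => π a ≤ π b) := by
    simpa using List.pairwise_mergeSort (le := fun a b => π a ≤ π b)
      (fun _ _ _ hab hbc => decide_eq_true (le_trans (of_decide_eq_true hab)
        (of_decide_eq_true hbc)))
      (fun a b => by simpa using le_total (π a) (π b)) 𝒟.toList
  have hnodup : L.Nodup := (List.mergeSort_perm _ _).nodup_iff.mpr (Finset.nodup_toList 𝒟)
  refine ⟨L, isSimpOrder_of_forall_append (fun L₁ D L₂ hL => ?_) ?_⟩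
  · have hD : D ∈ 𝒟 := (hmem D).mp (by simp [hL])
    rw [hL] at hsorted hnodup
    obtain ⟨-, hsorted₂, hsorted₁₂⟩ := List.pairwise_append.mp hsorted
    refine ⟨hcard D hD, srDelList_eq_srDelSet Δ L₁ ▸ hfree D hD _ (fun D' hD' hlt => ?_)
      (fun D' hD' => ⟨(hmem D').mp (hL ▸ List.mem_append_left _ hD'), hsorted₁₂ D' hD' D (by simp),
        fun h => List.disjoint_of_nodup_append hnodup (h ▸ hD') (by simp)⟩)⟩
    have : D' ∈ L₁ ++ D :: L₂ := hL ▸ (hmem D').mpr hD'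
    rcases List.mem_append.mp this with h | h | ⟨_, h⟩
    · exact h
    · exact absurd hlt (lt_irrefl _)
    · exact absurd ((List.pairwise_cons.mp hsorted₂).1 D' h) (not_le.mpr hlt)
  · rw [srDelList_eq_srDelSet, ← hskel]
    simp [hmem]

/-- What a simplicial order `E₀, E₁, …` of a smaller complex, with `Fᵢ` the facet containing
`Eᵢ` at its turn, tells about the faces of `Δ` with more than `d` vertices. -/
structure Peeling (Δ : Set (Finset (Fin n))) (d k : ℕ) where
  E : ℕ → Finset (Fin n)
  F : ℕ → Finset (Fin n)
  F_mem : ∀ i < k, F i ∈ Δ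
  card_E_lt : ∀ i < k, (E i).card < d
  subset_F : ∀ i < k, ∀ G ∈ Δ, d + 1 ≤ G.card → E i ⊂ G → (∀ j < i, ¬ E j ⊂ G) → G ⊆ F i
  exists_E_ssubset : ∀ G ∈ Δ, d + 1 ≤ G.card → ∃ i < k, E i ⊂ G
  not_E_ssubset_F : ∀ i < k, ∀ j < i, ¬ E j ⊂ F i

namespace Peeling

variable {Δ : Set (Finset (Fin n))} {d k : ℕ} (P : Peeling Δ d k)

/-- `D` can be deleted in the block of `Eⱼ`. The vertex `y` keeps `D` from being a facet at
its turn. -/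
def Admissible (D : Finset (Fin n)) (j : ℕ) : Prop :=
  j < k ∧ P.E j ⊆ D ∧ D ⊆ P.F j ∧ ∃ y ∈ P.F j \ D, ∀ x ∈ D \ P.E j, x < y

open Classical in
noncomputable def candidates : Finset (Finset (Fin n)) :=
  {D | D.card = d ∧ ∃ j, P.Admissible D j}

noncomputable def index (D : Finset (Fin n)) : ℕ := sInf {j | P.Admissible D j}

noncomputable def priority (D : Finset (Fin n)) : ℕ ×ₗ WithBot (Fin n) :=
  toLex (P.index D, (D \ P.E (P.index D)).max)

noncomputable def facetOf (D : Finset (Fin n)) : Finset (Fin n) :=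
  D ∪ {y ∈ P.F (P.index D) \ P.E (P.index D) | (D \ P.E (P.index D)).max < y}

variable {P}

lemma mem_candidates {D : Finset (Fin n)} :
    D ∈ P.candidates ↔ D.card = d ∧ ∃ j, P.Admissible D j := by
  simp [candidates]

lemma index_le {D : Finset (Fin n)} {j : ℕ} (h : P.Admissible D j) : P.index D ≤ j :=
  Nat.sInf_le h

lemma admissible_index {D : Finset (Fin n)} (hD : D ∈ P.candidates) :
    P.Admissible D (P.index D) :=
  Nat.sInf_mem (mem_candidates.mp hD).2

lemma priority_lt_of_index_lt {D D' : Finset (Fin n)} (h : P.index D' < P.index D) :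
    P.priority D' < P.priority D :=
  Prod.Lex.toLex_lt_toLex.mpr (Or.inl h)

lemma facetOf_subset_F {D : Finset (Fin n)} (hD : D ∈ P.candidates) :
    P.facetOf D ⊆ P.F (P.index D) :=
  Finset.union_subset (admissible_index hD).2.2.1
    ((Finset.filter_subset _ _).trans Finset.sdiff_subset)

lemma ssubset_facetOf {D : Finset (Fin n)} (hD : D ∈ P.candidates) : D ⊂ P.facetOf D := by
  obtain ⟨-, -, -, y, hy, hyD⟩ := admissible_index hD
  refine Finset.ssubset_iff_subset_ne.mpr ⟨Finset.subset_union_left, fun h => ?_⟩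
  have hyfacet : y ∈ P.facetOf D :=
    Finset.mem_union_right _ (Finset.mem_filter.mpr
      ⟨Finset.sdiff_subset_sdiff (subset_refl _) (admissible_index hD).2.1 hy,
        max_lt_coe_of_forall_lt hyD⟩)
  exact (Finset.mem_sdiff.mp hy).2 (h ▸ hyfacet)

lemma exists_first_E_ssubset {G : Finset (Fin n)} (hG : G ∈ Δ) (hcard : d + 1 ≤ G.card) :
    ∃ j < k, P.E j ⊂ G ∧ (∀ i < j, ¬ P.E i ⊂ G) ∧ G ⊆ P.F j := by
  classical
  have hex : ∃ j, j < k ∧ P.E j ⊂ G := by simpa using P.exists_E_ssubset G hG hcard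
  obtain ⟨hjk, hjG⟩ := Nat.find_spec hex
  have hfirst : ∀ i < Nat.find hex, ¬ P.E i ⊂ G := fun i hi hiG =>
    Nat.find_min hex hi ⟨hi.trans hjk, hiG⟩
  exact ⟨_, hjk, hjG, hfirst, P.subset_F _ hjk G hG hcard hjG hfirst⟩

lemma exists_candidate_ssubset {j : ℕ} (hj : j < k) {G : Finset (Fin n)} (hGF : G ⊆ P.F j)
    (hEG : P.E j ⊂ G) (hcard : d + 1 ≤ G.card) :
    ∃ D ∈ P.candidates, P.index D ≤ j ∧ D ⊂ G := by
  have hne : (G \ P.E j).Nonempty := Finset.sdiff_nonempty.mpr hEG.not_subset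
  set v := (G \ P.E j).max' hne
  have hv : v ∈ G \ P.E j := Finset.max'_mem _ _
  have hEv : P.E j ⊆ G.erase v :=
    Finset.subset_erase.mpr ⟨hEG.subset, (Finset.mem_sdiff.mp hv).2⟩
  have hcard_erase : d ≤ (G.erase v).card := by
    rw [Finset.card_erase_of_mem (Finset.mem_sdiff.mp hv).1]; omega
  obtain ⟨D, hED, hDG, hDcard⟩ :=
    Finset.exists_subsuperset_card_eq hEv (P.card_E_lt j hj).le hcard_erase
  have hadm : P.Admissible D j := by
    refine ⟨hj, hED, (hDG.trans (Finset.erase_subset _ _)).trans hGF, v,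
      Finset.mem_sdiff.mpr ⟨hGF (Finset.mem_sdiff.mp hv).1, fun h => ?_⟩, fun x hx => ?_⟩
    · simpa using hDG h
    · refine lt_of_le_of_ne (Finset.le_max' _ x ?_) fun h => ?_
      · exact Finset.sdiff_subset_sdiff ((hDG.trans (Finset.erase_subset _ _))) le_rfl hx
      · simpa [h] using hDG (Finset.mem_sdiff.mp hx).1
  exact ⟨D, mem_candidates.mpr ⟨hDcard, j, hadm⟩, index_le hadm,
    hDG.trans_ssubset (Finset.erase_ssubset (Finset.mem_sdiff.mp hv).1)⟩

lemma Admissible.insert_erase {D : Finset (Fin n)} {i : ℕ} (h : P.Admissible D i) {x m : Fin n}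
    (hxF : x ∈ P.F i) (hxD : x ∉ D) (hm : m ∈ D \ P.E i) (hxm : x < m) :
    P.Admissible (insert x (D.erase m)) i := by
  obtain ⟨hik, hED, hDF, y, hy, hyD⟩ := h
  obtain ⟨hmD, hmE⟩ := Finset.mem_sdiff.mp hm
  have hmy : m < y := hyD m hm
  refine ⟨hik, fun z hz => Finset.mem_insert_of_mem
      (Finset.mem_erase.mpr ⟨fun h => hmE (h ▸ hz), hED hz⟩),
    Finset.insert_subset hxF ((Finset.erase_subset _ _).trans hDF), y, ?_, fun z hz => ?_⟩
  · refine Finset.mem_sdiff.mpr ⟨(Finset.mem_sdiff.mp hy).1, fun hyD' => ?_⟩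
    rcases Finset.mem_insert.mp hyD' with h | h
    · exact (hxm.trans hmy).ne' h
    · exact (Finset.mem_sdiff.mp hy).2 (Finset.mem_of_mem_erase h)
  · obtain ⟨hzD', hzE⟩ := Finset.mem_sdiff.mp hz
    rcases Finset.mem_insert.mp hzD' with rfl | hz
    · exact hxm.trans hmy
    · exact hyD z (Finset.mem_sdiff.mpr ⟨Finset.mem_of_mem_erase hz, hzE⟩)

/-- The witness trades the largest vertex of `D` outside `Eᵢ` for `x`. -/
lemma exists_candidate_insert_erase {D : Finset (Fin n)} (hD : D ∈ P.candidates)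
    {x : Fin n} (hx : x ∈ P.F (P.index D) \ D) (hxmax : ↑x ≤ (D \ P.E (P.index D)).max) :
    ∃ D' ∈ P.candidates, P.priority D' < P.priority D ∧ D' ⊆ insert x D := by
  have hadm := admissible_index hD
  set i := P.index D
  obtain ⟨hDcard, -⟩ := mem_candidates.mp hD
  obtain ⟨hxF, hxD⟩ := Finset.mem_sdiff.mp hx
  have hne : (D \ P.E i).Nonempty :=
    Finset.sdiff_nonempty_of_card_lt_card (by rw [hDcard]; exact P.card_E_lt i hadm.1)
  obtain ⟨m, hm⟩ := Finset.max_of_nonempty hne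
  obtain ⟨hmD, hmE⟩ := Finset.mem_sdiff.mp (Finset.mem_of_max hm)
  have hxm : x < m :=
    lt_of_le_of_ne (WithBot.coe_le_coe.mp (hm ▸ hxmax)) fun h => hxD (h ▸ hmD)
  set D' := insert x (D.erase m)
  have hadm' : P.Admissible D' i := hadm.insert_erase hxF hxD (Finset.mem_of_max hm) hxm
  have hD'card : D'.card = d := by
    rw [Finset.card_insert_of_notMem fun h => hxD (Finset.mem_of_mem_erase h),
      Finset.card_erase_of_mem hmD, hDcard]
    have := P.card_E_lt i hadm.1
    omega
  refine ⟨D', mem_candidates.mpr ⟨hD'card, i, hadm'⟩, ?_,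
    Finset.insert_subset_insert _ (Finset.erase_subset _ _)⟩
  rcases (index_le hadm').lt_or_eq with hlt | heq
  · exact priority_lt_of_index_lt hlt
  refine Prod.Lex.toLex_lt_toLex.mpr (Or.inr ⟨heq, ?_⟩)
  change (D' \ P.E (P.index D')).max < (D \ P.E i).max
  rw [heq, hm]
  refine max_lt_coe_of_forall_lt fun z hz => ?_
  obtain ⟨hzD', hzE⟩ := Finset.mem_sdiff.mp hz
  rcases Finset.mem_insert.mp hzD' with rfl | hz
  · exact hxm
  · obtain ⟨hzm, hzD⟩ := Finset.mem_erase.mp hz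
    exact lt_of_le_of_ne (WithBot.coe_le_coe.mp
      (hm ▸ Finset.le_max (Finset.mem_sdiff.mpr ⟨hzD, hzE⟩))) hzm

lemma subset_facetOf_or_exists {D G : Finset (Fin n)} (hD : D ∈ P.candidates) (hG : G ∈ Δ)
    (hDG : D ⊆ G) :
    G ⊆ P.facetOf D ∨ ∃ D' ∈ P.candidates, P.priority D' < P.priority D ∧ D' ⊂ G := by
  obtain ⟨hik, hED, -, -⟩ := admissible_index hD
  obtain ⟨hDcard, -⟩ := mem_candidates.mp hD
  rcases hDG.eq_or_ssubset with rfl | hDG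
  · exact Or.inl (ssubset_facetOf hD).subset
  have hGcard : d + 1 ≤ G.card := hDcard ▸ Finset.card_lt_card hDG
  obtain ⟨j, hjk, hEG, hfirst, hGF⟩ := P.exists_first_E_ssubset hG hGcard
  have hji : j ≤ P.index D := le_of_not_gt fun h => hfirst _ h (hED.trans_ssubset hDG)
  rcases hji.lt_or_eq with hlt | rfl
  · obtain ⟨D', hD', hD'j, hD'G⟩ := P.exists_candidate_ssubset hjk hGF hEG hGcard
    exact Or.inr ⟨D', hD', priority_lt_of_index_lt (hD'j.trans_lt hlt), hD'G⟩
  by_cases hGfacet : G ⊆ P.facetOf D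
  · exact Or.inl hGfacet
  obtain ⟨x, hxG, hxfacet⟩ := Finset.not_subset.mp hGfacet
  have hxD : x ∉ D := fun h => hxfacet (Finset.mem_union_left _ h)
  have hxmax : ↑x ≤ (D \ P.E (P.index D)).max := by
    refine not_lt.mp fun h => hxfacet (Finset.mem_union_right _ (Finset.mem_filter.mpr
      ⟨Finset.mem_sdiff.mpr ⟨hGF hxG, fun hxE => hxD (hED hxE)⟩, h⟩))
  obtain ⟨D', hD', hlt, hD'x⟩ :=
    exists_candidate_insert_erase hD (Finset.mem_sdiff.mpr ⟨hGF hxG, hxD⟩) hxmax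
  have hD'G : D' ⊆ G := hD'x.trans (Finset.insert_subset hxG hDG.subset)
  refine Or.inr ⟨D', hD', hlt, Finset.ssubset_iff_subset_ne.mpr ⟨hD'G, ?_⟩⟩
  rintro rfl
  have := (mem_candidates.mp hD').1
  omega

lemma exists_lt_max_of_subset_facetOf {D D' : Finset (Fin n)} (hD : D ∈ P.candidates)
    (hD' : D' ∈ P.candidates) (hindex : P.index D' = P.index D) (hsub : D' ⊆ P.facetOf D)
    (hne : D' ≠ D) : ∃ y ∈ D' \ P.E (P.index D), (D \ P.E (P.index D)).max < y := by
  set E := P.E (P.index D)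
  have hED : E ⊆ D := (admissible_index hD).2.1
  have hED' : E ⊆ D' := by simpa only [hindex] using (admissible_index hD').2.1
  by_contra! hold
  have hsdiff : D' \ E ⊆ D \ E := fun y hy =>
    Finset.mem_sdiff.mpr ⟨(Finset.mem_union.mp (hsub (Finset.mem_sdiff.mp hy).1)).resolve_right
      fun h => not_lt.mpr (hold y hy) (Finset.mem_filter.mp h).2, (Finset.mem_sdiff.mp hy).2⟩
  have hcard : (D \ E).card ≤ (D' \ E).card := by
    rw [Finset.card_sdiff_of_subset hED, Finset.card_sdiff_of_subset hED',
      (mem_candidates.mp hD).1, (mem_candidates.mp hD').1]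
  apply hne
  calc D' = E ∪ (D' \ E) := (Finset.union_sdiff_of_subset hED').symm
    _ = E ∪ (D \ E) := by rw [Finset.eq_of_subset_of_card_le hsdiff hcard]
    _ = D := Finset.union_sdiff_of_subset hED

lemma priority_lt_of_subset_facetOf {D D' : Finset (Fin n)} (hD : D ∈ P.candidates)
    (hD' : D' ∈ P.candidates) (hsub : D' ⊆ P.facetOf D) (hne : D' ≠ D) :
    P.priority D < P.priority D' := by
  rcases lt_trichotomy (P.index D') (P.index D) with hlt | heq | hgt
  · have hD'F : D' ⊆ P.F (P.index D) := hsub.trans (facetOf_subset_F hD)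
    refine absurd (Finset.ssubset_iff_subset_ne.mpr ⟨(admissible_index hD').2.1.trans hD'F,
      fun h => ?_⟩) (P.not_E_ssubset_F _ (admissible_index hD).1 _ hlt)
    have := Finset.card_le_card (h ▸ hD'F : D' ⊆ P.E (P.index D'))
    have := P.card_E_lt _ (admissible_index hD').1
    have := (mem_candidates.mp hD').1
    omega
  · obtain ⟨y, hy, hmax⟩ := exists_lt_max_of_subset_facetOf hD hD' heq hsub hne
    refine Prod.Lex.toLex_lt_toLex.mpr (Or.inr ⟨heq.symm, ?_⟩)
    change (D \ P.E (P.index D)).max < (D' \ P.E (P.index D')).max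
    rw [heq]
    exact hmax.trans_le (Finset.le_max hy)
  · exact priority_lt_of_index_lt hgt

lemma isFreeFace_and_not_isFacet (hΔ : IsComplex Δ) (hskel : fullSkel n d ⊆ Δ)
    {D : Finset (Fin n)} (hD : D ∈ P.candidates) {S : Set (Finset (Fin n))}
    (hlow : ∀ D' ∈ P.candidates, P.priority D' < P.priority D → D' ∈ S)
    (hS : ∀ D' ∈ S, D' ∈ P.candidates ∧ P.priority D' ≤ P.priority D ∧ D' ≠ D) :
    IsFreeFace (srDelSet Δ S) D ∧ ¬ IsFacet (srDelSet Δ S) D := by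
  obtain ⟨hDcard, -⟩ := mem_candidates.mp hD
  have hDmem : D ∈ srDelSet Δ S := by
    refine ⟨hskel hDcard.le, fun D' hD' hD'D => ?_⟩
    have := Finset.card_lt_card hD'D
    have := (mem_candidates.mp (hS D' hD').1).1
    omega
  have hfacet_mem : P.facetOf D ∈ srDelSet Δ S := by
    refine ⟨hΔ _ (P.F_mem _ (admissible_index hD).1) _ (facetOf_subset_F hD),
      fun D' hD' hD'F => ?_⟩
    obtain ⟨hD'c, hle, hne⟩ := hS D' hD'
    exact not_lt.mpr hle (priority_lt_of_subset_facetOf hD hD'c hD'F.subset hne)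
  refine isFreeFace_and_not_isFacet_of_forall_subset hDmem hfacet_mem (ssubset_facetOf hD)
    fun G hG hDG => ?_
  rcases subset_facetOf_or_exists hD hG.1 hDG with hGF | ⟨D', hD', hlt, hD'G⟩
  · exact hGF
  · exact absurd hD'G (hG.2 D' (hlow D' hD' hlt))

lemma srDelSet_candidates (hskel : fullSkel n d ⊆ Δ) :
    srDelSet Δ P.candidates = fullSkel n d := by
  ext G
  refine ⟨fun ⟨hG, halive⟩ => (not_lt.mp fun hcard => ?_ : G.card ≤ d),
    fun hG => ⟨hskel hG, fun D hD hDG => ?_⟩⟩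
  · obtain ⟨j, hjk, hEG, -, hGF⟩ := P.exists_first_E_ssubset hG hcard
    obtain ⟨D, hD, -, hDG⟩ := P.exists_candidate_ssubset hjk hGF hEG hcard
    exact halive D hD hDG
  · have := Finset.card_lt_card hDG
    have := (mem_candidates.mp hD).1
    have : G.card ≤ d := hG
    omega

theorem exists_isSimpOrder (P : Peeling Δ d k) (hΔ : IsComplex Δ) (hskel : fullSkel n d ⊆ Δ) :
    ∃ L, IsSimpOrder d Δ L :=
  exists_isSimpOrder_of_priority Δ P.candidates P.priority
    (fun _ hD => (mem_candidates.mp hD).1)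
    (fun _ hD _ hlow hS => P.isFreeFace_and_not_isFacet hΔ hskel hD hlow hS)
    (P.srDelSet_candidates hskel)

end Peeling

/-- The simplicial order of `Δ'`, with the facet at each step, is a peeling of `Δ`. -/
theorem exists_isSimpOrder_succ {e : ℕ} {Δ' Δ : Set (Finset (Fin n))} (hΔ : IsComplex Δ)
    (hskel : fullSkel n (e + 1) ⊆ Δ) (hsub : Δ' ⊆ Δ) (hbig : ∀ G ∈ Δ, e + 2 ≤ G.card → G ∈ Δ')
    {L : List (Finset (Fin n))} (hL : IsSimpOrder e Δ' L) :
    ∃ L', IsSimpOrder (e + 1) Δ L' := by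
  have hfacet : ∀ i, ∃ F, i < L.length → F ∈ srDelList Δ' (L.take i) ∧
      ∀ G ∈ srDelList Δ' (L.take i), L.getD i ∅ ⊆ G → G ⊆ F := by
    intro i
    by_cases hi : i < L.length
    · obtain ⟨F, hF⟩ := (hL.card_and_isFreeFace_getD hi).2.exists_mem_forall_subset
      exact ⟨F, fun _ => hF⟩
    · exact ⟨∅, fun h => absurd h hi⟩
  choose F hF using hfacet
  have hFalive : ∀ i < L.length, F i ∈ Δ' ∧ ∀ j < i, j < L.length → ¬ L.getD j ∅ ⊂ F i :=
    fun i hi => (mem_srDelList_take_iff Δ' L i _).mp (hF i hi).1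
  exact Peeling.exists_isSimpOrder (k := L.length)
    { E := fun i => L.getD i ∅
      F := F
      F_mem := fun i hi => hsub (hFalive i hi).1
      card_E_lt := fun i hi => (hL.card_and_isFreeFace_getD hi).1 ▸ Nat.lt_succ_self e
      subset_F := fun i hi G hG hcard hEG hfirst => (hF i hi).2 G
        ((mem_srDelList_take_iff Δ' L i G).mpr ⟨hbig G hG hcard, fun j hj _ => hfirst j hj⟩)
        hEG.subset
      exists_E_ssubset := fun G hG hcard => hL.exists_getD_ssubset (hbig G hG hcard) (by omega)
      not_E_ssubset_F := fun i hi j hj => (hFalive i hi).2 j hj (hj.trans hi) }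
    hΔ hskel

theorem exists_isSimpOrder_univ {d : ℕ} (hd : 0 < d) :
    ∃ L, IsSimpOrder d (Set.univ : Set (Finset (Fin n))) L :=
  Peeling.exists_isSimpOrder (k := 1)
    { E := fun _ => ∅
      F := fun _ => Finset.univ
      F_mem := fun _ _ => trivial
      card_E_lt := fun _ _ => hd
      subset_F := fun _ _ G _ _ _ _ => Finset.subset_univ G
      exists_E_ssubset := fun G _ hG =>
        ⟨0, one_pos, Finset.empty_ssubset.mpr (Finset.card_pos.mp (by omega))⟩
      not_E_ssubset_F := fun i hi j hj => by omega }
    (fun _ _ _ _ => trivial) (fun _ _ => trivial)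

lemma exists_isMinNonface_subset {Γ : Set (Finset (Fin n))} {G : Finset (Fin n)} (hG : G ∉ Γ) :
    ∃ N ⊆ G, IsMinNonface Γ N := by
  obtain ⟨N, hNG, hN⟩ := (Set.toFinite {N | N ∉ Γ}).exists_le_minimal hG
  exact ⟨N, hNG, hN.prop, fun G' hG'N => by_contra fun hG' =>
    hG'N.not_subset (hN.le_of_le hG' hG'N.subset)⟩

lemma dClosure_eq_fullSkel {d : ℕ} {Γ : Set (Finset (Fin n))} (h : ∀ G ∈ Γ, G.card ≤ d) :
    dClosure d Γ = fullSkel n d := by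
  refine Set.Subset.antisymm (fun F hF => ?_) fun F hF => Or.inl hF
  rcases hF with hF | hall
  · exact hF
  refine (not_lt.mp fun hcard => ?_ : F.card ≤ d)
  obtain ⟨G, hGF, hGcard⟩ := Finset.exists_subset_card_eq hcard
  have := h G (hall G hGF hGcard)
  omega

lemma dClosure_eq_univ {d : ℕ} {Γ : Set (Finset (Fin n))}
    (h : ∀ N, IsMinNonface Γ N → d + 1 < N.card) :
    dClosure d Γ = Set.univ := by
  refine Set.eq_univ_of_forall fun F => Or.inr fun G _ hG => by_contra fun hGΓ => ?_
  obtain ⟨N, hNG, hN⟩ := exists_isMinNonface_subset hGΓ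
  have := Finset.card_le_card hNG
  have := h N hN
  omega

lemma dClosure_eq_union {d : ℕ} {Γ : Set (Finset (Fin n))} (hΓ : IsComplex Γ)
    (h : ∀ N, IsMinNonface Γ N → N.card ≤ d + 1) :
    dClosure d Γ = Γ ∪ fullSkel n d := by
  ext F
  refine ⟨fun hF => ?_, fun hF => hF.elim (fun hF => Or.inr fun G hGF _ => hΓ F hF G hGF) Or.inl⟩
  rcases hF with hF | hall
  · exact Or.inr hF
  refine (le_or_gt F.card d).elim Or.inr fun hcard => Or.inl (by_contra fun hFΓ => ?_)
  obtain ⟨N, hNF, hN⟩ := exists_isMinNonface_subset hFΓ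
  obtain ⟨G, hNG, hGF, hGcard⟩ := Finset.exists_subsuperset_card_eq hNF (h N hN) hcard
  exact hN.1 (hΓ G (hall G hGF hGcard) N hNG)

theorem DChordal.succ_of_le {Γ : Set (Finset (Fin n))} (hΓ : IsComplex Γ) {s e : ℕ}
    (hs : ∀ N, IsMinNonface Γ N → N.card ≤ s + 1) (hse : s ≤ e) (h : DChordal e Γ) :
    DChordal (e + 1) Γ := by
  obtain ⟨L, hL⟩ := h
  rw [dClosure_eq_union hΓ fun N hN => (hs N hN).trans (by omega)] at hL
  rw [DChordal, dClosure_eq_union hΓ fun N hN => (hs N hN).trans (by omega)]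
  refine exists_isSimpOrder_succ (fun F hF F' hF' => ?_) Set.subset_union_right
    (Set.union_subset_union_right Γ fun F hF => Nat.le_succ_of_le hF) (fun G hG hcard => ?_) hL
  · exact hF.imp (hΓ F · F' hF') fun hF => (Finset.card_le_card hF').trans hF
  · exact Or.inl (hG.resolve_right fun h : G.card ≤ e + 1 => by omega)

theorem DChordal.of_le {Γ : Set (Finset (Fin n))} (hΓ : IsComplex Γ) {s d : ℕ}
    (hs : ∀ N, IsMinNonface Γ N → N.card ≤ s + 1) (hsd : s ≤ d) (h : DChordal s Γ) :
    DChordal d Γ := by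
  induction d, hsd using Nat.le_induction with
  | base => exact h
  | succ e hse ih => exact DChordal.succ_of_le hΓ hs hse ih

end ChordalPaper

open ChordalPaper in
/-- with `t` (resp. `s`) the minimum (resp. maximum) dimension of a
minimal nonface of `Γ` and `r = dim Γ`, the complex `Γ` is chordal iff it is
`d`-chordal for all `t ≤ d ≤ min r s`. (Dimension of a finset is its cardinality
minus one.) -/
theorem stmt11 (n : ℕ) (Γ : Set (Finset (Fin n))) (hΓ : IsComplex Γ)
    (hvert : ∀ i : Fin n, ({i} : Finset (Fin n)) ∈ Γ)
    (t s r : ℕ)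
    (ht : (∃ F, IsMinNonface Γ F ∧ F.card = t + 1) ∧
      ∀ F, IsMinNonface Γ F → t + 1 ≤ F.card)
    (hs : (∃ F, IsMinNonface Γ F ∧ F.card = s + 1) ∧
      ∀ F, IsMinNonface Γ F → F.card ≤ s + 1)
    (hr : (∃ F ∈ Γ, F.card = r + 1) ∧ ∀ F ∈ Γ, F.card ≤ r + 1) :
    (∀ d, 1 ≤ d → DChordal d Γ) ↔ (∀ d, t ≤ d → d ≤ min r s → DChordal d Γ) := by
  obtain ⟨⟨Ft, hFt, hFt_card⟩, ht_le⟩ := ht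
  obtain ⟨⟨Fs, hFs, hFs_card⟩, hs_le⟩ := hs
  have ht_pos : 1 ≤ t := by
    refine Nat.one_le_iff_ne_zero.mpr fun ht0 => ?_
    obtain ⟨i, rfl⟩ := Finset.card_eq_one.mp (ht0 ▸ hFt_card)
    exact hFt.1 (hvert i)
  have hts : t ≤ s := by have := ht_le Fs hFs; omega
  refine ⟨fun h d htd _ => h d (ht_pos.trans htd), fun h d hd => ?_⟩
  rcases lt_or_ge r d with hrd | hdr
  · exact ⟨[], dClosure_eq_fullSkel fun G hG => by have := hr.2 G hG; omega⟩
  rcases lt_or_ge d t with hdt | htd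
  · rw [DChordal, dClosure_eq_univ fun N hN => by have := ht_le N hN; omega]
    exact exists_isSimpOrder_univ hd
  rcases le_or_gt d s with hds | hsd
  · exact h d htd (le_min hdr hds)
  · exact DChordal.of_le hΓ hs_le hsd.le (h s hts (le_min (by omega) le_rfl))
end

section
/- For d ≥ s, where s is the maximum dimension of a minimal nonface of Γ, the d-closure of Γ equals the d-closure of the s-closure of Γ: Δ_d(Γ) = Δ_d(Δ_s(Γ)); moreover both equal ⟨[n]⟩^{[d−1]} ∪ Δ_s(Γ). -/
open ChordalPaper in
lemma exists_minNonface_subset {n : ℕ} (Γ : Set (Finset (Fin n)))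
    (F : Finset (Fin n)) (hF : F ∉ Γ) : ∃ G ⊆ F, IsMinNonface Γ G := by
  induction F using Finset.strongInduction with
  | _ F ih =>
    by_cases h : ∀ G ⊂ F, G ∈ Γ
    · exact ⟨F, subset_rfl, hF, h⟩
    · push_neg at h
      obtain ⟨G, hGF, hG⟩ := h
      obtain ⟨H, hHG, hH⟩ := ih G hGF hG
      exact ⟨H, hHG.trans hGF.subset, hH⟩

open ChordalPaper in
lemma key_nonface {n s : ℕ} (Γ : Set (Finset (Fin n))) (hΓ : IsComplex Γ)
    (hs : ∀ F, IsMinNonface Γ F → F.card ≤ s + 1)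
    {k : ℕ} (hk : s ≤ k) {F : Finset (Fin n)} (hF : F ∉ Γ) (hcard : k + 1 ≤ F.card) :
    ∃ H ⊆ F, H.card = k + 1 ∧ H ∉ Γ := by
  obtain ⟨G, hGF, hG⟩ := exists_minNonface_subset Γ F hF
  have hGs : G.card ≤ k + 1 := (hs G hG).trans (by omega)
  obtain ⟨H, hGH, hHF, hHcard⟩ := Finset.exists_subsuperset_card_eq hGF hGs hcard
  refine ⟨H, hHF, hHcard, fun hHΓ => hG.1 (hΓ H hHΓ G hGH)⟩

open ChordalPaper in
lemma key_mem {n s : ℕ} (Γ : Set (Finset (Fin n))) (hΓ : IsComplex Γ)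
    (hs : ∀ F, IsMinNonface Γ F → F.card ≤ s + 1)
    {k : ℕ} (hk : s ≤ k) {F : Finset (Fin n)}
    (h : ∀ H ⊆ F, H.card = k + 1 → H ∈ Γ) (hcard : k + 1 ≤ F.card) : F ∈ Γ := by
  by_contra hF
  obtain ⟨H, hHF, hHc, hHΓ⟩ := key_nonface Γ hΓ hs hk hF hcard
  exact hHΓ (h H hHF hHc)

open ChordalPaper in
/-- for `d ≥ s`, where `s` is the maximum dimension of a minimal nonface
of `Γ`, one has `Δ_d(Γ) = Δ_d(Δ_s(Γ))`, and both equal `⟨[n]⟩^{[d-1]} ∪ Δ_s(Γ)`. -/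
theorem stmt12 (n s d : ℕ) (Γ : Set (Finset (Fin n))) (hΓ : IsComplex Γ)
    (hs : (∃ F, IsMinNonface Γ F ∧ F.card = s + 1) ∧
      ∀ F, IsMinNonface Γ F → F.card ≤ s + 1)
    (hd : s ≤ d) :
    dClosure d Γ = dClosure d (dClosure s Γ) ∧
      dClosure d Γ = fullSkel n d ∪ dClosure s Γ := by
  have hs2 := hs.2
  have h2 : dClosure d Γ = fullSkel n d ∪ dClosure s Γ := by
    ext F
    simp only [dClosure, fullSkel, Set.mem_union, Set.mem_setOf_eq]
    constructor
    · rintro (h | h)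
      · exact Or.inl h
      · rcases le_or_gt F.card d with hc | hc
        · exact Or.inl hc
        · have hFΓ : F ∈ Γ := key_mem Γ hΓ hs2 hd h hc
          exact Or.inr (Or.inr fun G hG _ => hΓ F hFΓ G hG)
    · rintro (h | h | h)
      · exact Or.inl h
      · exact Or.inl (h.trans hd)
      · rcases le_or_gt F.card d with hc | hc
        · exact Or.inl hc
        · have hFΓ : F ∈ Γ := key_mem Γ hΓ hs2 le_rfl h (by omega)
          exact Or.inr fun G hG _ => hΓ F hFΓ G hG
  have h1 : dClosure d (dClosure s Γ) = fullSkel n d ∪ dClosure s Γ := by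
    ext F
    simp only [dClosure, fullSkel, Set.mem_union, Set.mem_setOf_eq]
    constructor
    · rintro (h | h)
      · exact Or.inl h
      · rcases le_or_gt F.card d with hc | hc
        · exact Or.inl hc
        · refine Or.inr (Or.inr fun G hGF hGc => ?_)
          by_contra hG
          obtain ⟨H, hGH, hHF, hHc⟩ := Finset.exists_subsuperset_card_eq hGF
            (by omega : G.card ≤ d + 1) (by omega)
          rcases h H hHF hHc with hc' | hall
          · omega
          · exact hG (hall G hGH hGc)
    · rintro (h | h | h)
      · exact Or.inl h
      · exact Or.inl (h.trans hd)
      · refine Or.inr fun G hGF hGc => Or.inr fun K hKG hKc => h K (hKG.trans hGF) hKc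
  exact ⟨h2.trans h1.symm, h2⟩
end
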